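/- arXiv:2201.05018 — 2 statements merged into one kernel-verified Lean document; each statement's English description precedes it below -/
import Mathlib

section
/- Under Model M with p = 0 or p ∈ [1/3, 1), for every t ∈ ℝ and every player j, the conditional distribution of Σ_{i ≠ j} I_i^{(n)} given the event {I_j^{(n)} = 1} is stochastically smaller than the unconditional distribution of Σ_{i ≠ j} I_i^{(n)}: for every real u, P(Σ_{i ≠ j} I_i^{(n)} > u | I_j^{(n)} = 1) ≤ P(Σ_{i ≠ j} I_i^{(n)} > u). -/
open MeasureTheory ProbabilityTheory Real Filter

noncomputable section

/-- Score of player `i` after playing everyone else: `s_i = ∑_{j ≠ i} X i j`. -/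
def score {Ω : Type*} {n : ℕ} (X : Fin n → Fin n → Ω → ℝ) (i : Fin n) (ω : Ω) : ℝ :=
  ∑ j ∈ Finset.univ.erase i, X i j ω

/-- Model M of a round-robin tournament with `n` equally strong players and
draw probability `p`. -/
structure ModelM {Ω : Type*} [MeasurableSpace Ω] (P : Measure Ω) (n : ℕ) (p : ℝ)
    (X : Fin n → Fin n → Ω → ℝ) : Prop where
  prob : IsProbabilityMeasure P
  meas : ∀ i j, Measurable (X i j)
  values : ∀ i j, i ≠ j → ∀ ω, X i j ω = 0 ∨ X i j ω = 1/2 ∨ X i j ω = 1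
  sum_one : ∀ i j, i ≠ j → ∀ ω, X i j ω + X j i ω = 1
  draw : ∀ i j, i ≠ j → P {ω | X i j ω = 1/2} = ENNReal.ofReal p
  win : ∀ i j, i ≠ j → P {ω | X i j ω = 1} = ENNReal.ofReal ((1 - p) / 2)
  indep : iIndepFun
    (fun (e : {e : Fin n × Fin n // e.1 < e.2}) (ω : Ω) =>
      (X e.val.1 e.val.2 ω, X e.val.2 e.val.1 ω)) P

/-- Normalized score `s_i* = (s_i - (n-1)/2) / sqrt((n-1)(1-p)/4)`. -/
def nScore {Ω : Type*} {n : ℕ} (p : ℝ) (X : Fin n → Fin n → Ω → ℝ) (i : Fin n) (ω : Ω) : ℝ :=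
  (score X i ω - ((n : ℝ) - 1) / 2) / Real.sqrt (((n : ℝ) - 1) * (1 - p) / 4)

/-- `a_n = (2 log n)^{-1/2}`. -/
def aN (n : ℕ) : ℝ := 1 / Real.sqrt (2 * Real.log n)

/-- `b_n = (2 log n)^{1/2} - (1/2)(2 log n)^{-1/2} (log log n + log 4π)`. -/
def bN (n : ℕ) : ℝ :=
  Real.sqrt (2 * Real.log n)
    - (1 / 2) * (1 / Real.sqrt (2 * Real.log n)) * (Real.log (Real.log n) + Real.log (4 * Real.pi))

/-- The threshold `x_n(t) = a_n t + b_n`. -/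
def xN (n : ℕ) (t : ℝ) : ℝ := aN n * t + bN n

/-- `k`-th smallest value (order statistic) of the family `f : Fin n → ℝ`, for `k = 1, …, n`. -/
def orderStat {n : ℕ} (k : ℕ) (f : Fin n → ℝ) : ℝ :=
  ((Finset.univ.val.map f).sort (· ≤ ·)).getD (k - 1) 0

/-- Total variation distance between two measures on `ℕ`. -/
def tvDist (μ ν : Measure ℕ) : ℝ := ⨆ A : Set ℕ, |(μ A).toReal - (ν A).toReal|

/-- Standard normal cumulative distribution function. -/
def stdNormalCDF (x : ℝ) : ℝ :=
  (Real.sqrt (2 * Real.pi))⁻¹ * ∫ u in Set.Iic x, Real.exp (-u ^ 2 / 2)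

end

/-!
Condition on the results of all games not involving player `j`. Given them, the score of `j` is
an increasing function of `j`'s own results `X j k`, while the score `1 - X j k + (rest)` of every
other player `k` is decreasing in them, and these results are independent of each other and of the
conditioning games. Harris' inequality, proved by induction on the number of coordinates from
Chebyshev's integral inequality on each one-dimensional slice, therefore makes `{I_j = 1}` and
`{∑_{i ≠ j} I_i > u}` negatively correlated.
-/

open scoped ENNReal

theorem ENNReal.mul_add_mul_le_mul_add_mul {a b c d : ℝ≥0∞} (hab : a ≤ b) (hcd : c ≤ d) :
    a * d + b * c ≤ a * c + b * d := by
  obtain ⟨e, rfl⟩ := exists_add_of_le hab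
  calc a * d + (a + e) * c = a * c + (a * d + e * c) := by ring
    _ ≤ a * c + (a * d + e * d) := by gcongr
    _ = a * c + (a + e) * d := by ring

section Harris

variable {α : Type*} [MeasurableSpace α] [LinearOrder α]

theorem MeasureTheory.lintegral_mul_le_mul_lintegral_of_monotone_of_antitone (μ : Measure α)
    [IsProbabilityMeasure μ] {F G : α → ℝ≥0∞} (hF : Measurable F) (hG : Measurable G)
    (hFm : Monotone F) (hGa : Antitone G) :
    ∫⁻ x, F x * G x ∂μ ≤ (∫⁻ x, F x ∂μ) * ∫⁻ x, G x ∂μ := by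
  have rearrangement (z : α × α) :
      F z.1 * G z.1 + F z.2 * G z.2 ≤ F z.1 * G z.2 + F z.2 * G z.1 := by
    rcases le_total z.1 z.2 with h | h
    · exact ENNReal.mul_add_mul_le_mul_add_mul (hFm h) (hGa h)
    · simpa only [add_comm] using ENNReal.mul_add_mul_le_mul_add_mul (hFm h) (hGa h)
  have diag (i : α × α → α) (hi : Measurable i) (hmarg : (μ.prod μ).map i = μ) :
      ∫⁻ z, F (i z) * G (i z) ∂(μ.prod μ) = ∫⁻ x, F x * G x ∂μ := by
    conv_rhs => rw [← hmarg]
    exact (lintegral_map (hF.mul hG) hi).symm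
  have cross : ∫⁻ z : α × α, F z.1 * G z.2 ∂(μ.prod μ) = (∫⁻ x, F x ∂μ) * ∫⁻ x, G x ∂μ :=
    lintegral_prod_mul hF.aemeasurable hG.aemeasurable
  have cross' : ∫⁻ z : α × α, F z.2 * G z.1 ∂(μ.prod μ) = (∫⁻ x, F x ∂μ) * ∫⁻ x, G x ∂μ := by
    simp_rw [mul_comm (F _)]
    rw [lintegral_prod_mul hG.aemeasurable hF.aemeasurable, mul_comm]
  have h := lintegral_mono (μ := μ.prod μ) rearrangement
  rw [lintegral_add_left (f := fun z : α × α => F z.1 * G z.1) (by fun_prop),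
    lintegral_add_left (f := fun z : α × α => F z.1 * G z.2) (by fun_prop),
    diag Prod.fst measurable_fst (by simp), diag Prod.snd measurable_snd (by simp),
    cross, cross', ← two_mul, ← two_mul] at h
  exact (ENNReal.mul_le_mul_iff_right two_ne_zero ENNReal.ofNat_ne_top).mp h

theorem MeasurableEquiv.monotone_piFinSuccAbove_zero_symm {m : ℕ} :
    Monotone (MeasurableEquiv.piFinSuccAbove (fun _ : Fin (m + 1) => α) 0).symm := by
  intro a b h i
  cases i using Fin.cases <;> simp [MeasurableEquiv.piFinSuccAbove_symm_apply, h.1, h.2 _]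

theorem MeasureTheory.Measure.pi_inter_le_mul_of_isUpperSet_of_isLowerSet_fin :
    ∀ {m : ℕ} (μ : Fin m → Measure α) [∀ i, IsProbabilityMeasure (μ i)] {A B : Set (Fin m → α)},
      MeasurableSet A → MeasurableSet B → IsUpperSet A → IsLowerSet B →
      Measure.pi μ (A ∩ B) ≤ Measure.pi μ A * Measure.pi μ B
  | 0, μ, _, A, B, _, _, _, _ => by
    rcases A.eq_empty_or_nonempty with rfl | hA
    · simp
    · simp [hA.eq_univ]
  | m + 1, μ, _, A, B, hA, hB, hAu, hBl => by
    let e := MeasurableEquiv.piFinSuccAbove (fun _ : Fin (m + 1) => α) 0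
    let ν := Measure.pi fun i => μ (Fin.succAbove 0 i)
    let slice (S : Set (Fin (m + 1) → α)) (x : α) : Set (Fin m → α) :=
      Prod.mk x ⁻¹' (e.symm ⁻¹' S)
    have measure_eq {S} (hS : MeasurableSet S) :
        Measure.pi μ S = ∫⁻ x, ν (slice S x) ∂(μ 0) := by
      rw [← (measurePreserving_piFinSuccAbove μ 0).symm.measure_preimage_equiv]
      exact Measure.prod_apply (e.symm.measurable hS)
    have he := MeasurableEquiv.monotone_piFinSuccAbove_zero_symm (α := α) (m := m)
    have hF : Monotone fun x => ν (slice A x) := fun x x' hx =>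
      measure_mono fun r hr => hAu (he (show (x, r) ≤ (x', r) from ⟨hx, le_rfl⟩)) hr
    have hG : Antitone fun x => ν (slice B x) := fun x x' hx =>
      measure_mono fun r hr => hBl (he (show (x, r) ≤ (x', r) from ⟨hx, le_rfl⟩)) hr
    have harris_slice (x : α) : ν (slice (A ∩ B) x) ≤ ν (slice A x) * ν (slice B x) :=
      Measure.pi_inter_le_mul_of_isUpperSet_of_isLowerSet_fin _
        (measurable_prodMk_left (e.symm.measurable hA))
        (measurable_prodMk_left (e.symm.measurable hB))
        (fun r r' hr h => hAu (he (show (x, r) ≤ (x, r') from ⟨le_rfl, hr⟩)) h)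
        (fun r r' hr h => hBl (he (show (x, r') ≤ (x, r) from ⟨le_rfl, hr⟩)) h)
    calc Measure.pi μ (A ∩ B) = ∫⁻ x, ν (slice (A ∩ B) x) ∂(μ 0) := measure_eq (hA.inter hB)
      _ ≤ ∫⁻ x, ν (slice A x) * ν (slice B x) ∂(μ 0) := lintegral_mono harris_slice
      _ ≤ (∫⁻ x, ν (slice A x) ∂(μ 0)) * ∫⁻ x, ν (slice B x) ∂(μ 0) :=
        lintegral_mul_le_mul_lintegral_of_monotone_of_antitone _
          (measurable_measure_prodMk_left (e.symm.measurable hA))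
          (measurable_measure_prodMk_left (e.symm.measurable hB)) hF hG
      _ = Measure.pi μ A * Measure.pi μ B := by rw [measure_eq hA, measure_eq hB]

theorem MeasureTheory.Measure.pi_inter_le_mul_of_isUpperSet_of_isLowerSet {ι : Type*} [Fintype ι]
    (μ : ι → Measure α) [∀ i, IsProbabilityMeasure (μ i)] {A B : Set (ι → α)}
    (hA : MeasurableSet A) (hB : MeasurableSet B) (hAu : IsUpperSet A) (hBl : IsLowerSet B) :
    Measure.pi μ (A ∩ B) ≤ Measure.pi μ A * Measure.pi μ B := by
  let f := (Fintype.equivFin ι).symm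
  let e := MeasurableEquiv.piCongrLeft (fun _ => α) f
  have he : Monotone e := by
    intro v w h i
    obtain ⟨i, rfl⟩ := f.surjective i
    simpa [e, MeasurableEquiv.coe_piCongrLeft, Equiv.piCongrLeft_apply_apply] using h i
  simp only [← (measurePreserving_piCongrLeft μ f).measure_preimage_equiv, Set.preimage_inter]
  exact Measure.pi_inter_le_mul_of_isUpperSet_of_isLowerSet_fin _ (e.measurable hA)
    (e.measurable hB) (hAu.preimage he) (hBl.preimage he)

theorem ProbabilityTheory.measure_inter_le_mul_of_iIndepFun_of_indepFun {Ω β ι : Type*}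
    [MeasurableSpace Ω] [MeasurableSpace β] [Fintype ι] {P : Measure Ω} [IsProbabilityMeasure P]
    {Z : Ω → β} {Y : Ω → ι → α} (hZ : Measurable Z) (hY : Measurable Y)
    (hYi : iIndepFun (fun i ω => Y ω i) P) (hZY : IndepFun Z Y P)
    {A : Set (ι → α)} {B : Set (β × (ι → α))} (hA : MeasurableSet A) (hB : MeasurableSet B)
    (hAu : IsUpperSet A) (hBl : ∀ z, IsLowerSet (Prod.mk z ⁻¹' B)) :
    P (Y ⁻¹' A ∩ (fun ω => (Z ω, Y ω)) ⁻¹' B)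
      ≤ P (Y ⁻¹' A) * P ((fun ω => (Z ω, Y ω)) ⁻¹' B) := by
  have (i : ι) : IsProbabilityMeasure (P.map fun ω => Y ω i) :=
    Measure.isProbabilityMeasure_map ((measurable_pi_apply i).comp hY).aemeasurable
  have hlawY : P.map Y = Measure.pi fun i => P.map fun ω => Y ω i :=
    hYi.map_fun_eq_pi_map fun i => (measurable_pi_apply i).comp hY |>.aemeasurable
  have hlaw : P.map (fun ω => (Z ω, Y ω)) = (P.map Z).prod (P.map Y) :=
    hZY.map_prod_eq_prod_map_map hZ.aemeasurable hY.aemeasurable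
  have hZYm : Measurable fun ω => (Z ω, Y ω) := hZ.prodMk hY
  have hAB : MeasurableSet (Set.univ ×ˢ A ∩ B) := (MeasurableSet.univ.prod hA).inter hB
  have harris_slice (z : β) :
      P.map Y (A ∩ Prod.mk z ⁻¹' B) ≤ P.map Y A * P.map Y (Prod.mk z ⁻¹' B) := by
    rw [hlawY]
    exact Measure.pi_inter_le_mul_of_isUpperSet_of_isLowerSet _ hA
      (measurable_prodMk_left hB) hAu (hBl z)
  calc P (Y ⁻¹' A ∩ (fun ω => (Z ω, Y ω)) ⁻¹' B)
      = (P.map Z).prod (P.map Y) (Set.univ ×ˢ A ∩ B) := by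
        rw [← hlaw, Measure.map_apply hZYm hAB, Set.preimage_inter, Set.mk_preimage_prod,
          Set.preimage_univ, Set.univ_inter]
    _ = ∫⁻ z, P.map Y (A ∩ Prod.mk z ⁻¹' B) ∂(P.map Z) := by
        simp only [Measure.prod_apply hAB, Set.preimage_inter,
          Set.mk_preimage_prod_right (Set.mem_univ _)]
    _ ≤ ∫⁻ z, P.map Y A * P.map Y (Prod.mk z ⁻¹' B) ∂(P.map Z) := lintegral_mono harris_slice
    _ = P.map Y A * (P.map Z).prod (P.map Y) B := by
        rw [lintegral_const_mul _ (measurable_measure_prodMk_left hB), Measure.prod_apply hB]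
    _ = P (Y ⁻¹' A) * P ((fun ω => (Z ω, Y ω)) ⁻¹' B) := by
        rw [← hlaw, Measure.map_apply hZYm hB, Measure.map_apply hY hA]

end Harris

theorem ProbabilityTheory.cond_apply_le_of_measure_inter_le_mul {Ω : Type*} [MeasurableSpace Ω]
    {μ : Measure Ω} [IsFiniteMeasure μ] {s t : Set Ω} (hs : MeasurableSet s)
    (h : μ (s ∩ t) ≤ μ s * μ t) : μ[t|s] ≤ μ t := by
  rw [cond_apply hs]
  rcases eq_or_ne (μ s) 0 with h0 | h0
  · simp [measure_mono_null Set.inter_subset_left h0]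
  · calc (μ s)⁻¹ * μ (s ∩ t) ≤ (μ s)⁻¹ * (μ s * μ t) := by gcongr
      _ = μ t := ENNReal.inv_mul_cancel_left h0 (measure_ne_top μ s)

def sortedPair {n : ℕ} (a b : Fin n) (h : a ≠ b) : {e : Fin n × Fin n // e.1 < e.2} :=
  ⟨(min a b, max a b), min_lt_max.mpr h⟩

theorem sortedPair_injective {n : ℕ} (j : Fin n) :
    Function.Injective fun k : {k // k ≠ j} => sortedPair j k (Ne.symm k.2) := by
  intro k k' h
  simp only [sortedPair, Subtype.mk.injEq, Prod.mk.injEq] at h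
  ext
  rcases le_total j k with hk | hk <;> rcases le_total j k' with hk' | hk' <;> simp_all

def gamePair {Ω : Type*} {n : ℕ} (X : Fin n → Fin n → Ω → ℝ)
    (e : {e : Fin n × Fin n // e.1 < e.2}) (ω : Ω) : ℝ × ℝ :=
  (X e.val.1 e.val.2 ω, X e.val.2 e.val.1 ω)

def pairCoord {n : ℕ} (a b : Fin n) : ℝ × ℝ → ℝ := if a < b then Prod.fst else Prod.snd

theorem measurable_pairCoord {n : ℕ} (a b : Fin n) : Measurable (pairCoord a b) := by
  unfold pairCoord; split_ifs <;> fun_prop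

theorem pairCoord_gamePair {Ω : Type*} {n : ℕ} (X : Fin n → Fin n → Ω → ℝ) {a b : Fin n}
    (h : a ≠ b) : pairCoord a b ∘ gamePair X (sortedPair a b h) = X a b := by
  funext ω
  rcases h.lt_or_gt with h' | h'
  · simp [pairCoord, gamePair, sortedPair, h', h'.le]
  · simp [pairCoord, gamePair, sortedPair, h'.not_gt, h'.le]

def scoreExcept {Ω : Type*} {n : ℕ} (X : Fin n → Fin n → Ω → ℝ) (j k : Fin n) (ω : Ω) : ℝ :=
  ∑ l ∈ (Finset.univ.erase k).erase j, X k l ω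

theorem score_eq_sum_subtype {Ω : Type*} {n : ℕ} (X : Fin n → Fin n → Ω → ℝ) (j : Fin n)
    (ω : Ω) : score X j ω = ∑ k : {k // k ≠ j}, X j k ω :=
  Finset.sum_subtype _ (by simp) _

theorem isUpperSet_setOf_lt_sum_ite_mem {ι : Type*} [Fintype ι] {U : Set ℝ}
    [DecidablePred (· ∈ U)] (hU : IsUpperSet U) (u : ℝ) :
    IsUpperSet {s : ι → ℝ | u < ∑ k, if s k ∈ U then (1 : ℝ) else 0} :=
  fun a b hab (ha : u < _) => show u < _ from ha.trans_le <| Finset.sum_le_sum fun k _ => by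
    by_cases hk : a k ∈ U
    · simp [hk, hU (hab k) hk]
    · rw [if_neg hk]
      split_ifs <;> norm_num

namespace ModelM

variable {Ω : Type*} [MeasurableSpace Ω] {P : Measure Ω} {n : ℕ} {p : ℝ}
  {X : Fin n → Fin n → Ω → ℝ}

theorem score_eq_sub_add_scoreExcept (hM : ModelM P n p X) {j k : Fin n} (hkj : k ≠ j)
    (ω : Ω) : score X k ω = 1 - X j k ω + scoreExcept X j k ω := by
  rw [score, ← Finset.add_sum_erase _ _ (Finset.mem_erase.mpr ⟨hkj.symm, Finset.mem_univ j⟩),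
    scoreExcept, ← hM.sum_one j k hkj.symm ω]
  ring

theorem iIndepFun_games (hM : ModelM P n p X) (j : Fin n) :
    iIndepFun (fun (k : {k // k ≠ j}) => X j k) P := by
  have hW : iIndepFun (gamePair X) P := hM.indep
  simpa only [pairCoord_gamePair] using (hW.precomp (sortedPair_injective j)).comp
    (fun k => pairCoord j k) fun k => measurable_pairCoord _ _

theorem indepFun_scoreExcept_games (hM : ModelM P n p X) (j : Fin n) :
    IndepFun (fun ω (k : {k // k ≠ j}) => scoreExcept X j k ω)
      (fun ω (k : {k // k ≠ j}) => X j k ω) P := by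
  let m e : MeasurableSpace Ω := MeasurableSpace.comap (gamePair X e) inferInstance
  let S : Set {e : Fin n × Fin n // e.1 < e.2} := {e | j = e.1.1 ∨ j = e.1.2}
  have hind : Indep (⨆ e ∈ Sᶜ, m e) (⨆ e ∈ S, m e) P :=
    indep_iSup_of_disjoint (fun e => ((hM.meas _ _).prodMk (hM.meas _ _)).comap_le)
      ((iIndepFun_iff_iIndep _ _ _).mp hM.indep) disjoint_compl_left
  have hX {a b : Fin n} (h : a ≠ b) {T : Set _} (hT : sortedPair a b h ∈ T) :
      Measurable[⨆ e ∈ T, m e] (X a b) := by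
    rw [← pairCoord_gamePair X h]
    exact ((measurable_pairCoord a b).comp (comap_measurable _)).mono
      (le_iSup₂ (f := fun e _ => m e) _ hT) le_rfl
  have hR : Measurable[⨆ e ∈ Sᶜ, m e] fun ω (k : {k // k ≠ j}) => scoreExcept X j k ω := by
    refine @measurable_pi_lambda _ _ _ (⨆ e ∈ Sᶜ, m e) _ _
      fun k => Finset.measurable_sum _ fun l hl => ?_
    simp only [Finset.mem_erase] at hl
    refine hX (Ne.symm hl.2.1) ?_
    simp only [S, sortedPair, Set.mem_compl_iff, Set.mem_ofPred_eq, not_or]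
    constructor
    · rcases min_choice (k : Fin n) l with h | h <;> rw [h]
      exacts [k.2.symm, hl.1.symm]
    · rcases max_choice (k : Fin n) l with h | h <;> rw [h]
      exacts [k.2.symm, hl.1.symm]
  have hY : Measurable[⨆ e ∈ S, m e] fun ω (k : {k // k ≠ j}) => X j k ω := by
    refine @measurable_pi_lambda _ _ _ (⨆ e ∈ S, m e) _ _ fun k => hX (Ne.symm k.2) ?_
    rcases le_total j k with h | h
    · exact Or.inl (min_eq_left h).symm
    · exact Or.inr (max_eq_left h).symm
  exact (IndepFun_iff_Indep _ _ _).mpr (indep_of_indep_of_le hind hR.comap_le hY.comap_le)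

theorem measure_score_mem_inter_le_mul (hM : ModelM P n p X) (j : Fin n) {U : Set ℝ}
    {D : Set ({k // k ≠ j} → ℝ)} (hU : MeasurableSet U) (hD : MeasurableSet D)
    (hUu : IsUpperSet U) (hDu : IsUpperSet D) :
    P ({ω | score X j ω ∈ U} ∩ {ω | (fun k : {k // k ≠ j} => score X k ω) ∈ D})
      ≤ P {ω | score X j ω ∈ U} * P {ω | (fun k : {k // k ≠ j} => score X k ω) ∈ D} := by
  have := hM.prob
  let Y : Ω → {k // k ≠ j} → ℝ := fun ω k => X j k ω
  let R : Ω → {k // k ≠ j} → ℝ := fun ω k => scoreExcept X j k ω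
  have hA : {ω | score X j ω ∈ U} = Y ⁻¹' {y | ∑ k, y k ∈ U} := by
    ext ω
    simp [Y, score_eq_sum_subtype]
  have hB : {ω | (fun k : {k // k ≠ j} => score X k ω) ∈ D}
      = (fun ω => (R ω, Y ω)) ⁻¹' {q | (fun k => 1 - q.2 k + q.1 k) ∈ D} := by
    ext ω
    exact iff_of_eq (congrArg (· ∈ D) (funext fun k => hM.score_eq_sub_add_scoreExcept k.2 ω))
  have hY : Measurable Y := measurable_pi_lambda _ fun k => hM.meas _ _
  have hR : Measurable R := measurable_pi_lambda _ fun k =>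
    Finset.measurable_sum _ fun l _ => hM.meas _ _
  rw [hA, hB]
  refine measure_inter_le_mul_of_iIndepFun_of_indepFun hR hY
    (hM.iIndepFun_games j) (hM.indepFun_scoreExcept_games j) ?_ ?_ ?_ ?_
  · exact hU.preimage (by fun_prop)
  · exact hD.preimage (by fun_prop)
  · exact fun y y' h hy => hUu (Finset.sum_le_sum fun k _ => h k) hy
  · exact fun r y y' h hy => hDu (fun k => by dsimp only; linarith [h k]) hy

end ModelM

theorem exceedances_stochastically_smaller_given_exceedance_general
    {Ω : Type*} [MeasurableSpace Ω] (P : MeasureTheory.Measure Ω) (n : ℕ) (p : ℝ)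
    (X : Fin n → Fin n → Ω → ℝ) (hM : ModelM P n p X) (t : ℝ) (j : Fin n) (u : ℝ) :
    (P[|{ω | xN n t < nScore p X j ω}]
        {ω | u < ∑ i ∈ Finset.univ.erase j,
          if xN n t < nScore p X i ω then (1 : ℝ) else 0}).toReal
      ≤ (P {ω | u < ∑ i ∈ Finset.univ.erase j,
          if xN n t < nScore p X i ω then (1 : ℝ) else 0}).toReal := by
  have := hM.prob
  -- `{I_i = 1} = {score X i ∈ U}`, an upper set since the normalising divisor `√…` is `≥ 0`
  let U : Set ℝ := {s | xN n t < (s - ((n : ℝ) - 1) / 2) / √(((n : ℝ) - 1) * (1 - p) / 4)}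
  let D : Set ({k // k ≠ j} → ℝ) := {s | u < ∑ k, if s k ∈ U then (1 : ℝ) else 0}
  have hU : MeasurableSet U := measurableSet_lt measurable_const (by fun_prop)
  have hUu : IsUpperSet U := fun a b hab (ha : xN n t < _) =>
    show xN n t < _ from ha.trans_le (by gcongr)
  have hD : MeasurableSet D := measurableSet_lt measurable_const <|
    Finset.measurable_sum _ fun k _ => (measurable_const.indicator hU).comp (measurable_pi_apply k)
  have hcount : {ω | u < ∑ i ∈ Finset.univ.erase j,
      if xN n t < nScore p X i ω then (1 : ℝ) else 0}
      = {ω | (fun k : {k // k ≠ j} => score X k ω) ∈ D} := by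
    ext ω
    exact iff_of_eq (congrArg _ (Finset.sum_subtype _ (by simp) _))
  rw [hcount]
  exact ENNReal.toReal_mono (measure_ne_top _ _) <| cond_apply_le_of_measure_inter_le_mul
    (hU.preimage (Finset.measurable_sum _ fun _ _ => hM.meas _ _))
    (hM.measure_score_mem_inter_le_mul j hU hD hUu (isUpperSet_setOf_lt_sum_ite_mem hUu u))

/-- Conditionally on `{I_j = 1}`, the number of other exceedances is stochastically
smaller than unconditionally: for all real `u`,
`P(∑_{i≠j} I_i > u | I_j = 1) ≤ P(∑_{i≠j} I_i > u)`. -/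
theorem exceedances_stochastically_smaller_given_exceedance
    {Ω : Type*} [MeasurableSpace Ω] (P : MeasureTheory.Measure Ω) (n : ℕ) (p : ℝ)
    (X : Fin n → Fin n → Ω → ℝ) (hn : 2 ≤ n) (hM : ModelM P n p X)
    (hp : p = 0 ∨ (1/3 ≤ p ∧ p < 1)) (t : ℝ) (j : Fin n) (u : ℝ) :
    (P[|{ω | xN n t < nScore p X j ω}]
        {ω | u < ∑ i ∈ Finset.univ.erase j,
          if xN n t < nScore p X i ω then (1 : ℝ) else 0}).toReal
      ≤ (P {ω | u < ∑ i ∈ Finset.univ.erase j,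
          if xN n t < nScore p X i ω then (1 : ℝ) else 0}).toReal :=
  exceedances_stochastically_smaller_given_exceedance_general P n p X hM t j u
end

section
/- (F1) Under Model M with p = 0 or p ∈ [1/3, 1), for every fixed t ∈ ℝ, lim_{n→∞} Σ_{i=1}^n (π_i^{(n)})² = 0, i.e., lim_{n→∞} n · (P(s_1* > x_n(t)))² = 0. -/
open MeasureTheory ProbabilityTheory Real Filter

/-!
Chernoff bound. A centred game `X i j - 1/2` has moment generating function
`p + (1 - p) cosh (λ/2) ≤ exp ((1 - p) (cosh (λ/2) - 1))`, and the `n - 1` games of a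
player are independent. With `V = (n - 1)(1 - p)`, `λ = 2x/√V` and
`cosh u - 1 ≤ u²/2 + u⁴/4` this gives `P(s* > x) ≤ exp (-x²/2 + x⁴/(4V))` for
`0 < x ≤ √(2V)`. At `x = x_n(t) ~ √(2 log n)` the quartic term is `O((log n)²/n)`, while
`x_n(t)² ≥ 2 log n - log log n - log 4π + 2t`, so `n P(s* > x_n(t))² = O((log n)/n)`.
-/

open Topology

lemma Real.cosh_sub_one_le {u : ℝ} (hu : u ^ 2 ≤ 2) : cosh u - 1 ≤ u ^ 2 / 2 + u ^ 4 / 4 := by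
  have hexp := abs_exp_sub_one_sub_id_le (x := u ^ 2 / 2)
    (by rw [abs_of_nonneg (by positivity)]; linarith)
  have := (abs_le.mp hexp).2
  linarith [cosh_le_exp_half_sq u]

section FiniteRange

variable {Ω β : Type*} [MeasurableSpace Ω] {μ : Measure Ω} [IsFiniteMeasure μ]
  [MeasurableSpace β] [MeasurableSingletonClass β]

theorem integral_comp_eq_sum_measureReal {Y : Ω → β} (hY : Measurable Y) {S : Finset β}
    (hS : ∀ ω, Y ω ∈ S) (g : β → ℝ) :
    ∫ ω, g (Y ω) ∂μ = ∑ y ∈ S, μ.real {ω | Y ω = y} * g y := by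
  classical
  have hmeas : ∀ y, MeasurableSet {ω | Y ω = y} := fun y => hY (measurableSet_singleton y)
  have hsplit : (fun ω => g (Y ω))
      = fun ω => ∑ y ∈ S, {ω | Y ω = y}.indicator (fun _ => g y) ω := by
    funext ω
    rw [Finset.sum_eq_single_of_mem (Y ω) (hS ω) fun y _ hy => by simp [Ne.symm hy]]
    simp
  rw [hsplit, integral_finsetSum _ fun y _ => (integrable_const _).indicator (hmeas y)]
  simp_rw [integral_indicator_const _ (hmeas _), smul_eq_mul]

end FiniteRange

lemma mgf_sub_half_eq {Ω : Type*} [MeasurableSpace Ω] {P : Measure Ω} [IsFiniteMeasure P]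
    {Y : Ω → ℝ} (hY : Measurable Y) (hvals : ∀ ω, Y ω ∈ ({0, 1/2, 1} : Finset ℝ))
    {p : ℝ} (hp0 : 0 ≤ p) (hp1 : p ≤ 1)
    (hloss : P {ω | Y ω = 0} = ENNReal.ofReal ((1 - p) / 2))
    (hdraw : P {ω | Y ω = 1/2} = ENNReal.ofReal p)
    (hwin : P {ω | Y ω = 1} = ENNReal.ofReal ((1 - p) / 2)) (l : ℝ) :
    mgf (fun ω => Y ω - 1/2) P l = p + (1 - p) * cosh (l / 2) := by
  rw [mgf, integral_comp_eq_sum_measureReal (g := fun y => exp (l * (y - 1/2))) hY hvals,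
    Finset.sum_insert (by norm_num), Finset.sum_pair (by norm_num)]
  simp only [measureReal_def, hloss, hdraw, hwin, ENNReal.toReal_ofReal hp0,
    ENNReal.toReal_ofReal (by linarith : 0 ≤ (1 - p) / 2)]
  rw [cosh_eq, sub_self, mul_zero, exp_zero]
  ring_nf

lemma score_sub_eq_sum {Ω : Type*} {n : ℕ} (X : Fin n → Fin n → Ω → ℝ) (i : Fin n)
    (ω : Ω) :
    score X i ω - ((n : ℝ) - 1) / 2 = ∑ j : {j // j ≠ i}, (X i j ω - 1/2) := by
  have hcard : (Finset.univ.erase i).card = n - 1 := by simp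
  rw [← Finset.sum_subtype (Finset.univ.erase i) (fun j => by simp)
    (fun j => X i j ω - 1/2), Finset.sum_sub_distrib,
    Finset.sum_const, hcard, nsmul_eq_mul, Nat.cast_sub i.pos, score]
  ring

namespace ModelM

variable {Ω : Type*} [MeasurableSpace Ω] {P : Measure Ω} {n : ℕ} {p : ℝ}
  {X : Fin n → Fin n → Ω → ℝ}

lemma loss (M : ModelM P n p X) {i j : Fin n} (h : i ≠ j) :
    P {ω | X i j ω = 0} = ENNReal.ofReal ((1 - p) / 2) := by
  rw [← M.win j i h.symm]
  congr 1
  ext ω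
  have := M.sum_one i j h ω
  simp only [Set.mem_ofPred_eq]
  constructor <;> intro <;> linarith

lemma abs_sub_half_le (M : ModelM P n p X) {i j : Fin n} (h : i ≠ j) (ω : Ω) :
    |X i j ω - 1/2| ≤ 1/2 := by
  rcases M.values i j h ω with hv | hv | hv <;> rw [hv] <;> norm_num

lemma mgf_sub_half (M : ModelM P n p X) (hp0 : 0 ≤ p) (hp1 : p ≤ 1) {i j : Fin n} (h : i ≠ j)
    (l : ℝ) : mgf (fun ω => X i j ω - 1/2) P l = p + (1 - p) * cosh (l / 2) :=
  have := M.prob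
  mgf_sub_half_eq (M.meas i j) (fun ω => by simpa using M.values i j h ω) hp0 hp1
    (M.loss h) (M.draw i j h) (M.win i j h) l

lemma iIndepFun_sub_half (M : ModelM P n p X) (i : Fin n) :
    iIndepFun (fun (j : {j // j ≠ i}) (ω : Ω) => X i j ω - 1/2) P := by
  let pair : {j // j ≠ i} → {e : Fin n × Fin n // e.1 < e.2} :=
    fun j => ⟨(min i j, max i j), min_lt_max.2 j.2.symm⟩
  have hpair : pair.Injective := by
    intro j k hjk
    simp only [pair, Subtype.mk.injEq, Prod.mk.injEq] at hjk
    have := j.2; have := k.2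
    ext
    simp only [Fin.ext_iff, Fin.coe_min, Fin.coe_max] at *
    omega
  let g : {j // j ≠ i} → ℝ × ℝ → ℝ := fun j q => if i < j then q.1 - 1/2 else q.2 - 1/2
  convert (M.indep.precomp hpair).comp g fun j => by
    by_cases hij : i < j <;> simp only [g, hij, if_true, if_false] <;> fun_prop using 1
  funext j ω
  rcases lt_or_gt_of_ne j.2.symm with hij | hij
  · simp [pair, g, hij, min_eq_left hij.le, max_eq_right hij.le]
  · simp [pair, g, hij.not_gt, min_eq_right hij.le, max_eq_left hij.le]

lemma mgf_score_sub_le (M : ModelM P n p X) (hp0 : 0 ≤ p) (hp1 : p ≤ 1) (i : Fin n) (l : ℝ) :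
    mgf (fun ω => score X i ω - ((n : ℝ) - 1) / 2) P l
      ≤ exp (((n : ℝ) - 1) * (1 - p) * (cosh (l / 2) - 1)) := by
  have hsum : (fun ω => score X i ω - ((n : ℝ) - 1) / 2)
      = ∑ j : {j // j ≠ i}, fun ω => X i j ω - 1/2 := by
    funext ω
    rw [score_sub_eq_sum, Finset.sum_apply]
  have hgame : ∀ j : {j // j ≠ i}, mgf (fun ω => X i j ω - 1/2) P l
      ≤ exp ((1 - p) * (cosh (l / 2) - 1)) := fun j => by
    rw [M.mgf_sub_half hp0 hp1 j.2.symm]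
    linarith [add_one_le_exp ((1 - p) * (cosh (l / 2) - 1))]
  have hcard : (Fintype.card {j // j ≠ i} : ℝ) = (n : ℝ) - 1 := by
    simp [Nat.cast_sub i.pos]
  calc mgf (fun ω => score X i ω - ((n : ℝ) - 1) / 2) P l
      = ∏ j : {j // j ≠ i}, mgf (fun ω => X i j ω - 1/2) P l := by
        rw [hsum, (M.iIndepFun_sub_half i).mgf_sum fun j => (M.meas i j).sub_const _]
    _ ≤ ∏ _j : {j // j ≠ i}, exp ((1 - p) * (cosh (l / 2) - 1)) :=
        Finset.prod_le_prod (fun _ _ => mgf_nonneg) fun j _ => hgame j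
    _ = exp (((n : ℝ) - 1) * (1 - p) * (cosh (l / 2) - 1)) := by
        rw [Finset.prod_const, Finset.card_univ, ← exp_nat_mul, hcard, mul_assoc]

lemma integrable_exp_mul_score_sub (M : ModelM P n p X) (i : Fin n) (l : ℝ) :
    Integrable (fun ω => exp (l * (score X i ω - ((n : ℝ) - 1) / 2))) P := by
  have := M.prob
  simp_rw [score_sub_eq_sum,
    ← Finset.sum_apply (g := fun (j : {j // j ≠ i}) ω => X i j ω - 1/2)]
  refine (M.iIndepFun_sub_half i).integrable_exp_mul_sum (fun j => (M.meas i j).sub_const _)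
    fun j _ => Integrable.of_bound
      (((M.meas i j).sub_const _).const_mul l).exp.aestronglyMeasurable (exp (|l| / 2))
      (ae_of_all _ fun ω => ?_)
  rw [norm_eq_abs, abs_exp, exp_le_exp]
  calc l * (X i j ω - 1/2) ≤ |l| * |X i j ω - 1/2| := (le_abs_self _).trans (abs_mul _ _).le
    _ ≤ |l| * (1/2) := by gcongr; exact M.abs_sub_half_le j.2.symm ω
    _ = |l| / 2 := by ring

theorem measureReal_lt_nScore_le (M : ModelM P n p X) (hp0 : 0 ≤ p) (i : Fin n) {x : ℝ}
    (hx : 0 < x) (hxV : x ^ 2 ≤ 2 * (((n : ℝ) - 1) * (1 - p))) :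
    P.real {ω | x < nScore p X i ω}
      ≤ exp (-x ^ 2 / 2 + x ^ 4 / (4 * (((n : ℝ) - 1) * (1 - p)))) := by
  have := M.prob
  set V := ((n : ℝ) - 1) * (1 - p) with hVdef
  have hV : 0 < V := by nlinarith [pow_pos hx 2]
  have hp1 : p ≤ 1 := by
    have : (0 : ℝ) ≤ n - 1 := by simp [Nat.one_le_cast.2 i.pos]
    linarith [pos_of_mul_pos_right hV this]
  set s := √V
  have hs : 0 < s := sqrt_pos.2 hV
  have hs2 : s ^ 2 = V := sq_sqrt hV.le
  have hsub : {ω | x < nScore p X i ω}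
      ⊆ {ω | x * s / 2 ≤ score X i ω - ((n : ℝ) - 1) / 2} := by
    intro ω hω
    have hσ : √(V / 4) = s / 2 := by
      rw [sqrt_div hV.le, show (4 : ℝ) = 2 ^ 2 by norm_num, sqrt_sq (by norm_num)]
    simp only [Set.mem_ofPred_eq, nScore, ← hVdef, hσ, lt_div_iff₀ (half_pos hs)] at hω ⊢
    linarith
  have hcosh : V * (cosh (x / s) - 1) ≤ x ^ 2 / 2 + x ^ 4 / (4 * V) := by
    have hu : (x / s) ^ 2 ≤ 2 := by rw [div_pow, hs2, div_le_iff₀ hV]; linarith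
    calc V * (cosh (x / s) - 1) ≤ V * ((x / s) ^ 2 / 2 + (x / s) ^ 4 / 4) := by
          gcongr; exact cosh_sub_one_le hu
      _ = x ^ 2 / 2 + x ^ 4 / (4 * V) := by
          rw [div_pow, div_pow, show s ^ 4 = (s ^ 2) ^ 2 by ring, hs2]
          field_simp
  calc P.real {ω | x < nScore p X i ω}
      ≤ P.real {ω | x * s / 2 ≤ score X i ω - ((n : ℝ) - 1) / 2} := measureReal_mono hsub
    _ ≤ exp (-(2 * (x / s)) * (x * s / 2))
          * mgf (fun ω => score X i ω - ((n : ℝ) - 1) / 2) P (2 * (x / s)) :=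
        measure_ge_le_exp_mul_mgf _ (by positivity) (M.integrable_exp_mul_score_sub i _)
    _ ≤ exp (-(2 * (x / s)) * (x * s / 2)) * exp (V * (cosh (x / s) - 1)) := by
        gcongr
        simpa using M.mgf_score_sub_le hp0 hp1 i (2 * (x / s))
    _ = exp (-x ^ 2 + V * (cosh (x / s) - 1)) := by
        rw [← exp_add]
        field_simp
    _ ≤ exp (-x ^ 2 / 2 + x ^ 4 / (4 * V)) := exp_le_exp.2 (by linarith)

end ModelM

lemma xN_eq (n : ℕ) (t : ℝ) :
    xN n t = √(2 * log n) + (t - (log (log n) + log (4 * π)) / 2) / √(2 * log n) := by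
  unfold xN aN bN
  ring

lemma two_mul_log_add_le_xN_sq {n : ℕ} (hn : 0 < log n) (t : ℝ) :
    2 * log n + 2 * t - (log (log n) + log (4 * π)) ≤ xN n t ^ 2 := by
  set s := √(2 * log n)
  have hs2 : s ^ 2 = 2 * log n := sq_sqrt (by positivity)
  have hs0 : s ≠ 0 := (sqrt_pos.2 (by positivity)).ne'
  have hsq : ∀ d : ℝ, (s + d / s) ^ 2 = 2 * log n + 2 * d + (d / s) ^ 2 := fun d => by
    rw [add_sq, hs2]
    field_simp
  rw [xN_eq, hsq]
  linarith [sq_nonneg ((t - (log (log n) + log (4 * π)) / 2) / s)]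

lemma eventually_xN_pos_and_sq_le (t : ℝ) :
    ∀ᶠ n : ℕ in atTop, 0 < xN n t ∧ xN n t ^ 2 ≤ 8 * log n := by
  have hL : Tendsto (fun n : ℕ => log n) atTop atTop :=
    tendsto_log_atTop.comp tendsto_natCast_atTop_atTop
  have hd : Tendsto (fun n : ℕ => (t - (log (log n) + log (4 * π)) / 2) / log n)
      atTop (𝓝 0) := by
    have hinv := tendsto_inv_atTop_zero.comp hL
    have hll := isLittleO_log_id_atTop.tendsto_div_nhds_zero.comp hL
    convert ((hinv.const_mul t).sub (hll.div_const 2)).sub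
      (hinv.const_mul (log (4 * π) / 2)) using 1
    · funext n
      simp only [Function.comp_apply, id]
      ring
    · simp
  filter_upwards [hL.eventually_gt_atTop 0,
    hd.eventually (Ioo_mem_nhds neg_one_lt_zero one_pos)] with n hn hdn
  set d := t - (log (log n) + log (4 * π)) / 2
  set s := √(2 * log n)
  have hs : 0 < s := sqrt_pos.2 (by positivity)
  have hs2 : s ^ 2 = 2 * log n := sq_sqrt (by positivity)
  rw [lt_div_iff₀ hn, div_lt_iff₀ hn] at hdn
  have hds : |d / s| ≤ s / 2 := by
    rw [abs_div, abs_of_pos hs, div_le_iff₀ hs, abs_le]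
    constructor <;> nlinarith
  have hx : xN n t = s + d / s := xN_eq n t
  obtain ⟨hlo, hhi⟩ := abs_le.mp hds
  refine ⟨by rw [hx]; linarith, ?_⟩
  rw [hx]
  nlinarith

lemma tendsto_log_pow_div_sub_one_mul (k : ℕ) {c : ℝ} (hc : 0 < c) :
    Tendsto (fun n : ℕ => log n ^ k / (((n : ℝ) - 1) * c)) atTop (𝓝 0) := by
  refine ((tendsto_pow_log_div_mul_add_atTop c (-c) k hc.ne').comp
    tendsto_natCast_atTop_atTop).congr fun n => ?_
  simp only [Function.comp_apply]
  ring_nf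

lemma eventually_xN_sq_le {c : ℝ} (hc : 0 < c) (t : ℝ) :
    ∀ᶠ n : ℕ in atTop, xN n t ^ 2 ≤ 2 * (((n : ℝ) - 1) * c) := by
  filter_upwards [eventually_xN_pos_and_sq_le t, eventually_gt_atTop 1,
    (tendsto_log_pow_div_sub_one_mul 1 hc).eventually
      (eventually_le_nhds (by norm_num : (0 : ℝ) < 1 / 4))]
    with n hx hn hL
  have hV : 0 < ((n : ℝ) - 1) * c := mul_pos (by simp [hn]) hc
  rw [pow_one, div_le_iff₀ hV] at hL
  linarith [hx.2]

lemma tendsto_mul_exp_neg_xN_sq {c : ℝ} (hc : 0 < c) (t : ℝ) :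
    Tendsto (fun n : ℕ =>
        (n : ℝ) * exp (-xN n t ^ 2 + xN n t ^ 4 / (2 * (((n : ℝ) - 1) * c))))
      atTop (𝓝 0) := by
  set G : ℕ → ℝ := fun n =>
    log n / n * exp (log (4 * π) - 2 * t + 32 * (log n ^ 2 / (((n : ℝ) - 1) * c)))
  have hG : Tendsto G atTop (𝓝 0) := by
    have hlog : Tendsto (fun n : ℕ => log n / n) atTop (𝓝 0) :=
      isLittleO_log_id_atTop.tendsto_div_nhds_zero.comp tendsto_natCast_atTop_atTop
    have hexp := (continuous_exp.tendsto _).comp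
      (((tendsto_log_pow_div_sub_one_mul 2 hc).const_mul 32).const_add
        (log (4 * π) - 2 * t))
    simpa using hlog.mul hexp
  refine squeeze_zero' (Eventually.of_forall fun n => by positivity) ?_ hG
  filter_upwards [eventually_xN_pos_and_sq_le t, eventually_gt_atTop 1] with n hx hn
  have hn1 : (1 : ℝ) < n := by exact_mod_cast hn
  have hL : 0 < log n := log_pos hn1
  have hV : 0 < ((n : ℝ) - 1) * c := mul_pos (by linarith) hc
  have hquartic : xN n t ^ 4 / (2 * (((n : ℝ) - 1) * c))
      ≤ 32 * (log n ^ 2 / (((n : ℝ) - 1) * c)) :=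
    calc xN n t ^ 4 / (2 * (((n : ℝ) - 1) * c))
        = (xN n t ^ 2) ^ 2 / (2 * (((n : ℝ) - 1) * c)) := by ring
      _ ≤ (8 * log n) ^ 2 / (2 * (((n : ℝ) - 1) * c)) := by gcongr; exact hx.2
      _ = 32 * (log n ^ 2 / (((n : ℝ) - 1) * c)) := by field_simp; ring
  calc (n : ℝ) * exp (-xN n t ^ 2 + xN n t ^ 4 / (2 * (((n : ℝ) - 1) * c)))
      ≤ n * exp ((log (log n) - log n - log n)
          + (log (4 * π) - 2 * t + 32 * (log n ^ 2 / (((n : ℝ) - 1) * c)))) := by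
        gcongr (n : ℝ) * exp ?_
        linarith [two_mul_log_add_le_xN_sq hL t]
    _ = G n := by
        simp only [G]
        rw [exp_add, exp_sub, exp_sub, exp_log hL, exp_log (by linarith)]
        field_simp

/-- (F1): `lim_{n→∞} ∑_{i=1}^n (π_i^{(n)})² = lim_{n→∞} n · (P(s_1* > x_n(t)))² = 0`. -/
theorem sum_sq_tail_tendsto_zero
    {Ω : Type*} [MeasurableSpace Ω] (P : MeasureTheory.Measure Ω) (p : ℝ)
    (X : (n : ℕ) → Fin n → Fin n → Ω → ℝ)
    (hM : ∀ n, 2 ≤ n → ModelM P n p (X n))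
    (hp : p = 0 ∨ (1/3 ≤ p ∧ p < 1)) (t : ℝ) :
    Tendsto (fun n : ℕ =>
        ((n : ℝ) + 2) * (P {ω | xN (n + 2) t < nScore p (X (n + 2)) 0 ω}).toReal ^ 2)
      atTop (nhds 0) := by
  obtain ⟨hp0, hp1⟩ : 0 ≤ p ∧ p < 1 := by
    rcases hp with rfl | ⟨h1, h2⟩
    · norm_num
    · exact ⟨by linarith, h2⟩
  have hc : 0 < 1 - p := by linarith
  have hshift := tendsto_add_atTop_nat 2
  refine squeeze_zero' (Eventually.of_forall fun n => by positivity) ?_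
    ((tendsto_mul_exp_neg_xN_sq hc t).comp hshift)
  filter_upwards [hshift.eventually (eventually_xN_pos_and_sq_le t),
    hshift.eventually (eventually_xN_sq_le hc t)] with n hx hxV
  have htail := (hM (n + 2) (by omega)).measureReal_lt_nScore_le hp0 0 hx.1 hxV
  set x := xN (n + 2) t
  set V := (((n + 2 : ℕ) : ℝ) - 1) * (1 - p)
  calc ((n : ℝ) + 2) * (P {ω | x < nScore p (X (n + 2)) 0 ω}).toReal ^ 2
      ≤ ((n : ℝ) + 2) * exp (-x ^ 2 / 2 + x ^ 4 / (4 * V)) ^ 2 := by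
        gcongr
        exact htail
    _ = ((n + 2 : ℕ) : ℝ) * exp (-x ^ 2 + x ^ 4 / (2 * V)) := by
        rw [← exp_nat_mul]
        push_cast
        ring_nf
end
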